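/- arXiv:1805.06315 — 2 statements merged into one kernel-verified Lean document; each statement's English description precedes it below -/
import Mathlib

section
/- Let P = (F^o, F^u) be an update flow pair whose union F^o ∪ F^u is a DAG, and let z_1 ≺ z_2 ≺ … ≺ z_k be the common vertices of F^o and F^u in topological order (z_1 = s, z_k = t). Then the edge sets of the blocks b_1, …, b_{k−1}, where b_j is induced by the vertices v with z_j ⪯ v ⪯ z_{j+1}, partition the symmetric difference of the edge sets of F^o and F^u, and within each block F^o and F^u are internally vertex-disjoint paths from z_j to z_{j+1}. -/
/-!
A formal model of congestion-free flow rerouting (network update scheduling).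
An update flow network consists of a source `s`, a terminal `t`, edge
capacities, and `k` update flow pairs, each given by an old `s`-`t` path and
an update (new) `s`-`t` path (represented as lists of vertices) with a demand.
An update sequence assigns to every update `(v, i)` (vertex `v`, pair `i`) a
round; it is feasible if resolving all updates of earlier rounds together with
any subset of the current round always leaves, for every pair, a unique valid
(capacity-respecting) transient `s`-`t` path among the active edges, and the
family of transient paths jointly respects the capacities.
-/

namespace FlowUpdate

variable {V : Type} [DecidableEq V] {k : ℕ}

/-- The edges of a path given as a list of vertices. -/
def edgesOf (p : List V) : List (V × V) := p.zip p.tail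

/-- The subpath of `p` from vertex `a` to vertex `z` (inclusive). -/
def segment (p : List V) (a z : V) : List V :=
  ((p.dropWhile (fun v => decide (v ≠ a))).takeWhile (fun v => decide (v ≠ z))) ++ [z]

/-- The outgoing edge of `v` on the path `p`, if any. -/
def outEdge (p : List V) (v : V) : Option (V × V) :=
  (edgesOf p).find? (fun e => decide (e.1 = v))

/-- An update flow network with `k` update flow pairs. -/
structure UFN (V : Type) (k : ℕ) where
  s : V
  t : V
  cap : V → V → ℕ
  old : Fin k → List V
  new : Fin k → List V
  demand : Fin k → ℕ

namespace UFN

/-- After resolving the set of updates `U`, edge `e` is active for pair `i` iff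
it is an old edge whose tail is not yet updated, or a new edge whose tail is
updated. -/
def active (G : UFN V k) (U : Set (V × Fin k)) (i : Fin k) (e : V × V) : Prop :=
  (e ∈ edgesOf (G.old i) ∧ (e.1, i) ∉ U) ∨ (e ∈ edgesOf (G.new i) ∧ (e.1, i) ∈ U)

/-- `p` is a simple `s`-`t` path all of whose edges satisfy `E`. -/
def IsPathIn (E : V × V → Prop) (s t : V) (p : List V) : Prop :=
  p.head? = some s ∧ p.getLast? = some t ∧ List.Chain' (fun u v => E (u, v)) p ∧ p.Nodup

/-- `p` respects the capacities for the demand of pair `i`. -/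
def ValidPath (G : UFN V k) (i : Fin k) (p : List V) : Prop :=
  ∀ e ∈ edgesOf p, G.demand i ≤ G.cap e.1 e.2

/-- `T` is the unique valid transient path of pair `i` after resolving `U`. -/
def TransientPair (G : UFN V k) (U : Set (V × Fin k)) (i : Fin k) (T : List V) : Prop :=
  IsPathIn (G.active U i) G.s G.t T ∧ G.ValidPath i T ∧
    ∀ p, IsPathIn (G.active U i) G.s G.t p → G.ValidPath i p → p = T

/-- After resolving `U`, every pair has a unique valid transient path, and the
family of transient paths jointly respects the capacities. -/
def TransientFamily (G : UFN V k) (U : Set (V × Fin k)) : Prop :=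
  ∃ T : Fin k → List V,
    (∀ i, G.TransientPair U i (T i)) ∧
    (∀ u v : V, (∑ i : Fin k, if (u, v) ∈ edgesOf (T i) then G.demand i else 0) ≤ G.cap u v)

/-- An update sequence (an assignment of rounds to all updates) is feasible if
after resolving all updates of rounds `< r` together with any subset of the
updates of round `r`, all pairs admit a transient family. -/
def Feasible (G : UFN V k) (R : V × Fin k → ℕ) : Prop :=
  ∀ r : ℕ, ∀ S : Set (V × Fin k), (∀ u ∈ S, R u = r) →
    G.TransientFamily ({u | R u < r} ∪ S)

/-- `p` is a simple path from the source to the terminal. -/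
def IsStPath (G : UFN V k) (p : List V) : Prop :=
  p.head? = some G.s ∧ p.getLast? = some G.t ∧ p.Nodup

/-- Well-formedness of an update flow network: all old and new flows are simple
`s`-`t` paths, each pair forms a DAG, each new path respects capacities for its
own demand, and both the old family and the new family jointly respect the
capacities. -/
def WellFormed (G : UFN V k) : Prop :=
  (∀ i, G.IsStPath (G.old i) ∧ G.IsStPath (G.new i)) ∧
  (∀ i, ∃ ord : V → ℕ, ∀ e ∈ edgesOf (G.old i) ++ edgesOf (G.new i), ord e.1 < ord e.2) ∧
  (∀ i, G.ValidPath i (G.new i)) ∧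
  (∀ u v : V, (∑ i : Fin k, if (u, v) ∈ edgesOf (G.old i) then G.demand i else 0) ≤ G.cap u v) ∧
  (∀ u v : V, (∑ i : Fin k, if (u, v) ∈ edgesOf (G.new i) then G.demand i else 0) ≤ G.cap u v)

/-- The common vertices of the old and new path of pair `i`, in path order. -/
def commons (G : UFN V k) (i : Fin k) : List V :=
  (G.old i).filter (fun v => decide (v ∈ G.new i))

/-- A block of pair `i` is a pair `(a, z)` of consecutive common vertices of the
old and new paths of `i`. -/
def IsBlock (G : UFN V k) (i : Fin k) (b : V × V) : Prop :=
  b ∈ edgesOf (G.commons i)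

/-- A (candidate) block: a pair index together with its start and end vertices. -/
abbrev Blk (V : Type) (k : ℕ) := Fin k × V × V

def IsBlk (G : UFN V k) (b : Blk V k) : Prop := G.IsBlock b.1 b.2

/-- The old-path segment of a block. -/
def blkOldSeg (G : UFN V k) (b : Blk V k) : List V := segment (G.old b.1) b.2.1 b.2.2

/-- The update-path segment of a block. -/
def blkNewSeg (G : UFN V k) (b : Blk V k) : List V := segment (G.new b.1) b.2.1 b.2.2

/-- Block `b1` depends on block `b2` (written `b1 → b2`) if they belong to
different pairs and some edge lies on `b1`'s update path and on `b2`'s old path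
with capacity less than the sum of the two demands. -/
def Dep (G : UFN V k) (b1 b2 : Blk V k) : Prop :=
  G.IsBlk b1 ∧ G.IsBlk b2 ∧ b1.1 ≠ b2.1 ∧
  ∃ e : V × V, e ∈ edgesOf (G.blkNewSeg b1) ∧ e ∈ edgesOf (G.blkOldSeg b2) ∧
    G.cap e.1 e.2 < G.demand b1.1 + G.demand b2.1

/-- The dependency graph contains a directed cycle. -/
def HasDepCycle (G : UFN V k) : Prop := ∃ b : Blk V k, Relation.TransGen G.Dep b b

/-- The number of rounds used by an update sequence. -/
def numRounds [Fintype V] (R : V × Fin k → ℕ) : ℕ :=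
  (Finset.image R Finset.univ).card

/-- An update `(v, i)` is empty if `v`'s outgoing old edge and outgoing new edge
for pair `i` coincide (in particular if `v` has no outgoing edge for pair `i`). -/
def EmptyUpd (G : UFN V k) (u : V × Fin k) : Prop :=
  outEdge (G.old u.2) u.1 = outEdge (G.new u.2) u.1

instance (G : UFN V k) (u : V × Fin k) : Decidable (G.EmptyUpd u) :=
  inferInstanceAs (Decidable (outEdge (G.old u.2) u.1 = outEdge (G.new u.2) u.1))

/-- `R` updates every block in (at most) 3 consecutive rounds: first all internal
update-path vertices of the block, then the start vertex, then all old-path-only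
vertices of the block. -/
def BlockPattern (G : UFN V k) (R : V × Fin k → ℕ) : Prop :=
  ∀ b : Blk V k, G.IsBlk b → ∃ r : ℕ,
    (∀ v ∈ G.blkNewSeg b, v ≠ b.2.1 → v ≠ b.2.2 → R (v, b.1) = r) ∧
    R (b.2.1, b.1) = r + 1 ∧
    (∀ v ∈ G.blkOldSeg b, v ∉ G.new b.1 → R (v, b.1) = r + 2)

/-- The size of the network (total length of the flow paths). -/
def size (G : UFN V k) : ℕ := ∑ i : Fin k, ((G.old i).length + (G.new i).length)

end UFN

end FlowUpdate

/-!
Fix a topological order `ord` of `F^o ∪ F^u`. Both paths, and hence the list of their common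
vertices, are strictly increasing in `ord`, and the edges of a strictly increasing list are exactly
the pairs of its members that are consecutive in `ord`. Hence an edge `(u, v)` of either path lies
in the segment of a block `(z_j, z_{j+1})` iff `ord z_j ≤ ord u < ord z_{j+1}`, and exactly one pair
of consecutive common vertices straddles `ord u` in this way. A vertex on both segments of a block
is a common vertex between `z_j` and `z_{j+1}` in `ord`, hence one of the two.
-/

namespace FlowUpdate

theorem mem_edgesOf {V : Type} {p : List V} {u v : V} :
    (u, v) ∈ edgesOf p ↔ ∃ l₁ l₂, p = l₁ ++ u :: v :: l₂ := by
  suffices (u, v) ∈ edgesOf p ↔ [u, v] <:+: p by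
    rw [this]
    exact ⟨fun ⟨s, t, h⟩ => ⟨s, t, by simp [← h]⟩,
      fun ⟨s, t, h⟩ => ⟨s, t, by simp [h]⟩⟩
  induction p with
  | nil => simp [edgesOf]
  | cons a l ih =>
    cases l with
    | nil => simpa [edgesOf] using fun h : [u, v] <:+: [a] => by simpa using h.length_le
    | cons b l =>
      rw [List.infix_cons_iff, ← ih]
      simp [edgesOf, List.cons_prefix_cons]

section Sorted

variable {V : Type} {α : Type*} [LinearOrder α] {f : V → α} {p : List V}

theorem pairwise_of_forall_mem_edgesOf (h : ∀ e ∈ edgesOf p, f e.1 < f e.2) :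
    p.Pairwise (f · < f ·) :=
  (List.isChain_iff_forall_rel_of_append_cons_cons.mpr fun a b _ _ hp =>
    h (a, b) (mem_edgesOf.mpr ⟨_, _, hp⟩)).pairwise

theorem eq_of_apply_eq_of_pairwise (hp : p.Pairwise (f · < f ·)) {x y : V} (hx : x ∈ p)
    (hy : y ∈ p) (h : f x = f y) : x = y :=
  List.inj_on_of_nodup_map ((List.pairwise_map.mpr hp).imp ne_of_lt) hx hy h

theorem le_of_head?_eq (hp : p.Pairwise (f · < f ·)) {s w : V} (hs : p.head? = some s)
    (hw : w ∈ p) : f s ≤ f w := by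
  obtain ⟨l, rfl⟩ : ∃ l, p = s :: l := List.head?_eq_some_iff.mp hs
  rcases List.mem_cons.mp hw with rfl | hw
  · exact le_rfl
  · exact (List.rel_of_pairwise_cons hp hw).le

theorem le_of_getLast?_eq (hp : p.Pairwise (f · < f ·)) {t w : V} (ht : p.getLast? = some t)
    (hw : w ∈ p) : f w ≤ f t := by
  obtain ⟨l, rfl⟩ := List.getLast?_eq_some_iff.mp ht
  rcases List.mem_append.mp hw with hw | hw
  · exact ((List.pairwise_append.mp hp).2.2 w hw t (List.mem_singleton_self t)).le
  · rw [List.mem_singleton.mp hw]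

theorem mem_of_mem_append_cons_of_lt {l₁ r : List V} {a w : V}
    (hp : (l₁ ++ a :: r).Pairwise (f · < f ·)) (hw : w ∈ l₁ ++ a :: r) (haw : f a < f w) :
    w ∈ r := by
  rcases List.mem_append.mp hw with hw | hw
  · exact absurd ((List.pairwise_append.mp hp).2.2 w hw a List.mem_cons_self) (not_lt.mpr haw.le)
  · exact (List.mem_cons.mp hw).resolve_left (ne_of_apply_ne f haw.ne')

theorem mem_edgesOf_iff_of_pairwise (hp : p.Pairwise (f · < f ·)) {u v : V} :
    (u, v) ∈ edgesOf p ↔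
      u ∈ p ∧ v ∈ p ∧ f u < f v ∧ ∀ w ∈ p, f w ≤ f u ∨ f v ≤ f w := by
  constructor
  · rw [mem_edgesOf]
    rintro ⟨l₁, l₂, rfl⟩
    obtain ⟨-, hu, hl₁⟩ := List.pairwise_append.mp hp
    obtain ⟨hu, hv⟩ := List.pairwise_cons.mp hu
    have huv : f u < f v := hu v List.mem_cons_self
    refine ⟨by simp, by simp, huv, fun w hw => ?_⟩
    simp only [List.mem_append, List.mem_cons] at hw
    rcases hw with hw | rfl | rfl | hw
    · exact .inl (hl₁ w hw u List.mem_cons_self).le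
    · exact .inl le_rfl
    · exact .inr le_rfl
    · exact .inr (List.rel_of_pairwise_cons hv hw).le
  · rintro ⟨hu, hv, huv, hgap⟩
    obtain ⟨l₁, r, rfl⟩ := List.append_of_mem hu
    have hvr : v ∈ r := mem_of_mem_append_cons_of_lt hp hv huv
    have hur := (List.pairwise_append.mp hp).2.1
    obtain ⟨b, r, rfl⟩ := List.exists_cons_of_ne_nil (List.ne_nil_of_mem hvr)
    obtain rfl : b = v := by
      refine (List.mem_cons.mp hvr).elim Eq.symm fun hv => ?_
      have hub : f u < f b := List.rel_of_pairwise_cons hur List.mem_cons_self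
      have hbv : f b < f v := List.rel_of_pairwise_cons (List.pairwise_cons.mp hur).2 hv
      rcases hgap b (by simp) with h | h <;> order
    exact mem_edgesOf.mpr ⟨l₁, r, rfl⟩

theorem exists_mem_edgesOf_straddle (hp : p.Pairwise (f · < f ·)) {x y : V} (hx : x ∈ p)
    (hy : y ∈ p) {t : α} (hxt : f x ≤ t) (hty : t < f y) :
    ∃ e ∈ edgesOf p, f e.1 ≤ t ∧ t < f e.2 := by
  induction p generalizing x with
  | nil => simp at hx
  | cons a l ih =>
    obtain ⟨ha, hl⟩ := List.pairwise_cons.mp hp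
    have hat : f a ≤ t := by
      rcases List.mem_cons.mp hx with rfl | hx
      · exact hxt
      · exact (ha x hx).le.trans hxt
    cases l with
    | nil =>
      obtain rfl := List.mem_singleton.mp hy
      order
    | cons b l =>
      by_cases hbt : f b ≤ t
      · have hyl : y ∈ b :: l := (List.mem_cons.mp hy).resolve_left (by rintro rfl; order)
        obtain ⟨e, he, hte⟩ := ih hl List.mem_cons_self hyl hbt
        exact ⟨e, List.mem_cons_of_mem _ he, hte⟩
      · exact ⟨(a, b), List.mem_cons_self, hat, not_le.mp hbt⟩

theorem existsUnique_mem_edgesOf_straddle (hp : p.Pairwise (f · < f ·)) {x y : V} (hx : x ∈ p)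
    (hy : y ∈ p) {t : α} (hxt : f x ≤ t) (hty : t < f y) :
    ∃! e, e ∈ edgesOf p ∧ f e.1 ≤ t ∧ t < f e.2 := by
  obtain ⟨⟨a, z⟩, he, hte⟩ := exists_mem_edgesOf_straddle hp hx hy hxt hty
  refine ⟨(a, z), ⟨he, hte⟩, fun ⟨a', z'⟩ ⟨he', hte'⟩ => ?_⟩
  obtain ⟨ha, hz, -, hgap⟩ := (mem_edgesOf_iff_of_pairwise hp).mp he
  obtain ⟨ha', hz', -, hgap'⟩ := (mem_edgesOf_iff_of_pairwise hp).mp he'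
  dsimp only at hte hte'
  have haa : f a' = f a := by
    rcases hgap a' ha' with h | h <;> rcases hgap' a ha with h' | h' <;> order
  have hzz : f z' = f z := by
    rcases hgap z' hz' with h | h <;> rcases hgap' z hz with h' | h' <;> order
  rw [eq_of_apply_eq_of_pairwise hp ha' ha haa, eq_of_apply_eq_of_pairwise hp hz' hz hzz]

end Sorted

section Segment

variable {V : Type} [DecidableEq V]

theorem head?_segment {p : List V} {a : V} (ha : a ∈ p) (z : V) :
    (segment p a z).head? = some a := by
  induction p with
  | nil => simp at ha
  | cons b l ih =>
    by_cases hb : b = a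
    · subst hb
      by_cases hz : b = z <;> simp [segment, hz]
    · have hseg : segment (b :: l) a z = segment l a z := by simp [segment, hb]
      rw [hseg]
      exact ih ((List.mem_cons.mp ha).resolve_left (Ne.symm hb))

theorem getLast?_segment (p : List V) (a z : V) : (segment p a z).getLast? = some z :=
  List.getLast?_concat ..

theorem segment_append_cons_append_cons {l₁ l₂ l₃ : List V} {a z : V} (ha : a ∉ l₁)
    (hz : z ∉ l₂) (haz : a ≠ z) :
    segment (l₁ ++ a :: (l₂ ++ z :: l₃)) a z = a :: (l₂ ++ [z]) := by
  have h₁ : ∀ w ∈ l₁, decide (w ≠ a) = true :=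
    fun w hw => decide_eq_true (ne_of_mem_of_not_mem hw ha)
  have h₂ : ∀ w ∈ a :: l₂, decide (w ≠ z) = true := by
    rintro w (_ | ⟨_, hw⟩)
    · exact decide_eq_true haz
    · exact decide_eq_true (ne_of_mem_of_not_mem hw hz)
  rw [segment, List.dropWhile_append_of_pos h₁, List.dropWhile_cons_of_neg (by simp),
    ← List.cons_append, List.takeWhile_append_of_pos h₂, List.takeWhile_cons_of_neg (by simp)]
  simp

variable {α : Type*} [LinearOrder α] {f : V → α} {p : List V}

theorem exists_segment_eq_of_pairwise (hp : p.Pairwise (f · < f ·)) {a z : V} (ha : a ∈ p)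
    (hz : z ∈ p) (haz : f a < f z) :
    ∃ l₁ l₂ l₃, p = l₁ ++ a :: (l₂ ++ z :: l₃) ∧
      segment p a z = a :: (l₂ ++ [z]) := by
  obtain ⟨l₁, r, rfl⟩ := List.append_of_mem ha
  obtain ⟨l₂, l₃, rfl⟩ := List.append_of_mem (mem_of_mem_append_cons_of_lt hp hz haz)
  obtain ⟨-, har, hl₁⟩ := List.pairwise_append.mp hp
  obtain ⟨-, -, hl₂⟩ := List.pairwise_append.mp (List.pairwise_cons.mp har).2
  refine ⟨l₁, l₂, l₃, rfl,
    segment_append_cons_append_cons ?_ ?_ (ne_of_apply_ne f haz.ne)⟩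
  · exact fun h => lt_irrefl _ (hl₁ a h a List.mem_cons_self)
  · exact fun h => lt_irrefl _ (hl₂ z h z List.mem_cons_self)

theorem segment_sublist (hp : p.Pairwise (f · < f ·)) {a z : V} (ha : a ∈ p) (hz : z ∈ p)
    (haz : f a < f z) : (segment p a z).Sublist p := by
  obtain ⟨l₁, l₂, l₃, rfl, hseg⟩ := exists_segment_eq_of_pairwise hp ha hz haz
  rw [hseg]
  simp

theorem mem_segment_iff (hp : p.Pairwise (f · < f ·)) {a z : V} (ha : a ∈ p) (hz : z ∈ p)
    (haz : f a < f z) {w : V} :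
    w ∈ segment p a z ↔ w ∈ p ∧ f a ≤ f w ∧ f w ≤ f z := by
  obtain ⟨l₁, l₂, l₃, rfl, hseg⟩ := exists_segment_eq_of_pairwise hp ha hz haz
  rw [hseg]
  simp only [List.pairwise_append, List.pairwise_cons, List.mem_append, List.mem_cons,
    forall_eq_or_imp] at hp
  grind

theorem mem_edgesOf_segment_iff (hp : p.Pairwise (f · < f ·)) {a z : V} (ha : a ∈ p)
    (hz : z ∈ p) (haz : f a < f z) {u v : V} :
    (u, v) ∈ edgesOf (segment p a z) ↔ (u, v) ∈ edgesOf p ∧ f a ≤ f u ∧ f u < f z := by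
  have hseg (w : V) := mem_segment_iff hp ha hz haz (w := w)
  simp only [mem_edgesOf_iff_of_pairwise hp,
    mem_edgesOf_iff_of_pairwise (hp.sublist (segment_sublist hp ha hz haz)), hseg]
  constructor
  · rintro ⟨⟨hu, hau, -⟩, ⟨hv, -, hvz⟩, huv, hgap⟩
    refine ⟨⟨hu, hv, huv, fun w hw => ?_⟩, hau, huv.trans_le hvz⟩
    by_cases haw : f a ≤ f w
    · by_cases hwz : f w ≤ f z
      · exact hgap w ⟨hw, haw, hwz⟩
      · exact .inr (by order)
    · exact .inl (by order)
  · rintro ⟨⟨hu, hv, huv, hgap⟩, hau, huz⟩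
    have hvz : f v ≤ f z := (hgap z hz).resolve_left (not_le.mpr huz)
    exact ⟨⟨hu, hau, huz.le⟩, ⟨hv, by order, hvz⟩, huv, fun w hw => hgap w hw.1⟩

end Segment

section Blocks

variable {V : Type} [DecidableEq V] {α : Type*} [LinearOrder α] {f : V → α} {p q : List V}

theorem mem_edgesOf_segment_or_iff (hp : p.Pairwise (f · < f ·)) (hq : q.Pairwise (f · < f ·))
    {a z : V} (hap : a ∈ p) (haq : a ∈ q) (hzp : z ∈ p) (hzq : z ∈ q) (haz : f a < f z)
    {u v : V} (he : (u, v) ∈ edgesOf p ∨ (u, v) ∈ edgesOf q) :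
    ((u, v) ∈ edgesOf (segment p a z) ∨ (u, v) ∈ edgesOf (segment q a z)) ↔
      f a ≤ f u ∧ f u < f z := by
  rw [mem_edgesOf_segment_iff hp hap hzp haz, mem_edgesOf_segment_iff hq haq hzq haz]
  tauto

theorem existsUnique_block (hp : p.Pairwise (f · < f ·)) (hq : q.Pairwise (f · < f ·))
    {s t : V} (hps : p.head? = some s) (hqs : q.head? = some s) (hpt : p.getLast? = some t)
    (hqt : q.getLast? = some t) {e : V × V} (he : e ∈ edgesOf p ∨ e ∈ edgesOf q) :
    ∃! b : V × V, b ∈ edgesOf (p.filter (fun v => decide (v ∈ q))) ∧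
      (e ∈ edgesOf (segment p b.1 b.2) ∨ e ∈ edgesOf (segment q b.1 b.2)) := by
  set c := p.filter (fun v => decide (v ∈ q))
  have hc : c.Pairwise (f · < f ·) := hp.filter _
  have hmem {w : V} : w ∈ c ↔ w ∈ p ∧ w ∈ q := by simp [c]
  obtain ⟨u, v⟩ := e
  obtain ⟨r, hr, hrs, hrt, her⟩ : ∃ r : List V, r.Pairwise (f · < f ·) ∧
      r.head? = some s ∧ r.getLast? = some t ∧ (u, v) ∈ edgesOf r := by
    rcases he with he | he
    exacts [⟨p, hp, hps, hpt, he⟩, ⟨q, hq, hqs, hqt, he⟩]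
  obtain ⟨hu, hv, huv, -⟩ := (mem_edgesOf_iff_of_pairwise hr).mp her
  have hs : s ∈ c := hmem.mpr ⟨List.mem_of_mem_head? hps, List.mem_of_mem_head? hqs⟩
  have ht : t ∈ c := hmem.mpr ⟨List.mem_of_getLast? hpt, List.mem_of_getLast? hqt⟩
  refine (existsUnique_congr fun b => and_congr_right fun hb => ?_).mp
    (existsUnique_mem_edgesOf_straddle hc hs ht (le_of_head?_eq hr hrs hu)
      (huv.trans_le (le_of_getLast?_eq hr hrt hv)))
  obtain ⟨ha, hz, haz, -⟩ := (mem_edgesOf_iff_of_pairwise hc).mp hb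
  exact (mem_edgesOf_segment_or_iff hp hq (hmem.mp ha).1 (hmem.mp ha).2 (hmem.mp hz).1
    (hmem.mp hz).2 haz he).symm

theorem eq_or_eq_of_mem_segment_of_mem_segment (hp : p.Pairwise (f · < f ·))
    (hq : q.Pairwise (f · < f ·)) {a z w : V}
    (hb : (a, z) ∈ edgesOf (p.filter (fun v => decide (v ∈ q))))
    (hwp : w ∈ segment p a z) (hwq : w ∈ segment q a z) : w = a ∨ w = z := by
  set c := p.filter (fun v => decide (v ∈ q))
  have hc : c.Pairwise (f · < f ·) := hp.filter _
  have hmem {w : V} : w ∈ c ↔ w ∈ p ∧ w ∈ q := by simp [c]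
  obtain ⟨ha, hz, haz, hgap⟩ := (mem_edgesOf_iff_of_pairwise hc).mp hb
  obtain ⟨hwp, haw, hwz⟩ := (mem_segment_iff hp (hmem.mp ha).1 (hmem.mp hz).1 haz).mp hwp
  have hwc : w ∈ c :=
    hmem.mpr ⟨hwp, ((mem_segment_iff hq (hmem.mp ha).2 (hmem.mp hz).2 haz).mp hwq).1⟩
  rcases hgap w hwc with h | h
  · exact .inl (eq_of_apply_eq_of_pairwise hc hwc ha (le_antisymm h haw))
  · exact .inr (eq_of_apply_eq_of_pairwise hc hwc hz (le_antisymm hwz h))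

end Blocks

end FlowUpdate

open FlowUpdate in
/-- For an update flow pair whose union is a DAG, the edge sets of
the blocks partition the symmetric difference of the edge sets of the old and
the update path: every edge lying on exactly one of the two paths belongs to
exactly one block; moreover within each block the old and update paths are
internally vertex-disjoint paths from the start of the block to its end. -/
theorem stmt13 {V : Type} [DecidableEq V] {k : ℕ} (G : UFN V k)
    (hWF : G.WellFormed) (i : Fin k) :
    (∀ e : V × V,
      ((e ∈ edgesOf (G.old i) ∧ e ∉ edgesOf (G.new i)) ∨
       (e ∈ edgesOf (G.new i) ∧ e ∉ edgesOf (G.old i))) →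
      ∃! b : V × V, G.IsBlock i b ∧
        (e ∈ edgesOf (segment (G.old i) b.1 b.2) ∨
         e ∈ edgesOf (segment (G.new i) b.1 b.2))) ∧
    (∀ a z : V, G.IsBlock i (a, z) →
      (segment (G.old i) a z).head? = some a ∧
      (segment (G.old i) a z).getLast? = some z ∧
      (segment (G.new i) a z).head? = some a ∧
      (segment (G.new i) a z).getLast? = some z ∧
      ∀ v ∈ segment (G.old i) a z, v ∈ segment (G.new i) a z → v = a ∨ v = z) := by
  obtain ⟨hpaths, hdag, -, -, -⟩ := hWF
  obtain ⟨⟨hps, hpt, -⟩, hqs, hqt, -⟩ := hpaths i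
  obtain ⟨ord, hord⟩ := hdag i
  have hp : (G.old i).Pairwise (ord · < ord ·) :=
    pairwise_of_forall_mem_edgesOf fun e he => hord e (List.mem_append_left _ he)
  have hq : (G.new i).Pairwise (ord · < ord ·) :=
    pairwise_of_forall_mem_edgesOf fun e he => hord e (List.mem_append_right _ he)
  refine ⟨fun e he => existsUnique_block hp hq hps hqs hpt hqt (he.imp And.left And.left),
    fun a z hb => ?_⟩
  have ha : a ∈ G.old i ∧ a ∈ G.new i := by
    simpa [UFN.commons] using (List.of_mem_zip hb).1
  exact ⟨head?_segment ha.1 z, getLast?_segment .., head?_segment ha.2 z, getLast?_segment ..,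
    fun w => eq_or_eq_of_mem_segment_of_mem_segment hp hq hb⟩
end

section
/- In any feasible update sequence, if block b₁ depends on block b₂ (b₁ → b₂), then the start vertex of b₂ is updated in a round strictly before the round in which the start vertex of b₁ is updated. -/
/-!
Resolve every update of an earlier round than `start(b₁)`, together with `start(b₁)` itself.
Ordering each pair's vertices by its DAG, a vertex strictly between two consecutive common
vertices `c, c'` lies on only one of the two paths, so there a single out-edge is active. Hence
a transient flow, once at `c`, follows the new segment from `c` to `c'` if `c` is updated and
the old segment otherwise; inductively it visits every common vertex. So the transient flow
of `b₁`'s pair uses the whole update segment of `b₁`, and if `start(b₂)` were not updated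
strictly earlier, the transient flow of `b₂`'s pair would use the old segment of `b₂`. Both
would then cross the dependency edge, whose capacity is less than the sum of their demands.
-/

namespace FlowUpdate

variable {V : Type}

theorem edgesOf_cons_cons (u w : V) (p : List V) :
    edgesOf (u :: w :: p) = (u, w) :: edgesOf (w :: p) := rfl

theorem mem_edgesOf_iff {x y : V} : ∀ {p : List V},
    (x, y) ∈ edgesOf p ↔ ∃ l r, p = l ++ x :: y :: r
  | [] => by simp [edgesOf]
  | [u] => by
      simp only [edgesOf, List.tail_cons, List.zip_nil_right, List.not_mem_nil, false_iff]
      rintro ⟨l, r, h⟩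
      have := congrArg List.length h
      simp only [List.length_cons, List.length_nil, zero_add, List.length_append] at this
      omega
  | u :: w :: p => by
      rw [edgesOf_cons_cons, List.mem_cons, mem_edgesOf_iff, Prod.mk.injEq]
      constructor
      · rintro (⟨rfl, rfl⟩ | ⟨l, r, h⟩)
        · exact ⟨[], p, rfl⟩
        · exact ⟨u :: l, r, by rw [h]; rfl⟩
      · rintro ⟨_ | ⟨a, l⟩, r, h⟩
        · simp_all
        · simp only [List.cons_append, List.cons.injEq] at h
          exact Or.inr ⟨l, r, h.2⟩

theorem isChain_iff_forall_mem_edgesOf {R : V → V → Prop} {p : List V} :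
    p.IsChain R ↔ ∀ e ∈ edgesOf p, R e.1 e.2 := by
  rw [List.isChain_iff_forall_rel_of_append_cons_cons]
  exact ⟨fun h _ he => let ⟨_, _, hp⟩ := mem_edgesOf_iff.1 he; h hp,
    fun h _ _ l r hp => h _ (mem_edgesOf_iff.2 ⟨l, r, hp⟩)⟩

theorem mem_of_mem_edgesOf {x y : V} {p : List V} (h : (x, y) ∈ edgesOf p) :
    x ∈ p ∧ y ∈ p := by
  obtain ⟨l, r, rfl⟩ := mem_edgesOf_iff.1 h
  simp

theorem edgesOf_subset_of_infix {p q : List V} (h : q <:+: p) : edgesOf q ⊆ edgesOf p := by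
  obtain ⟨l, r, rfl⟩ := h
  rintro ⟨x, y⟩ hxy
  obtain ⟨l', r', rfl⟩ := mem_edgesOf_iff.1 hxy
  exact mem_edgesOf_iff.2 ⟨l ++ l', r' ++ r, by simp⟩

theorem fst_mem_of_mem_edgesOf_concat {x y z : V} {l : List V}
    (h : (x, y) ∈ edgesOf (l ++ [z])) : x ∈ l := by
  obtain ⟨l', r, hl⟩ := mem_edgesOf_iff.1 h
  have := congrArg List.dropLast hl
  rw [List.dropLast_concat, List.dropLast_append_cons] at this
  simp [this]

theorem snd_eq_of_mem_edgesOf {x y y' : V} : ∀ {p : List V}, p.Nodup →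
    (x, y) ∈ edgesOf p → (x, y') ∈ edgesOf p → y = y'
  | [] => by simp [edgesOf]
  | [u] => by simp [edgesOf]
  | u :: w :: p => fun hp h h' => by
      have hu : u ∉ w :: p := (List.nodup_cons.1 hp).1
      rw [edgesOf_cons_cons, List.mem_cons, Prod.mk.injEq] at h h'
      rcases h with ⟨rfl, rfl⟩ | h <;> rcases h' with ⟨hx, rfl⟩ | h'
      · rfl
      · exact absurd (mem_of_mem_edgesOf h').1 hu
      · exact absurd (mem_of_mem_edgesOf h).1 (hx ▸ hu)
      · exact snd_eq_of_mem_edgesOf (List.nodup_cons.1 hp).2 h h'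

theorem not_mem_edgesOf_of_getLast? {p : List V} {t y : V} (hp : p.Nodup)
    (ht : p.getLast? = some t) : (t, y) ∉ edgesOf p := by
  intro h
  obtain ⟨l, r, rfl⟩ := mem_edgesOf_iff.1 h
  rw [show l ++ t :: y :: r = (l ++ [t]) ++ y :: r by simp, List.getLast?_append,
    List.getLast?_cons] at ht
  have ht' : (y :: r).getLast (List.cons_ne_nil _ _) = t := by
    simpa [List.getLast_eq_getLastD] using ht
  exact (List.nodup_cons.1 (List.nodup_append.1 hp).2.1).1 (ht' ▸ List.getLast_mem _)

theorem exists_mem_edgesOf_of_ne_getLast? {p : List V} {t v : V}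
    (ht : p.getLast? = some t) (hv : v ∈ p) (hne : v ≠ t) : ∃ w, (v, w) ∈ edgesOf p := by
  obtain ⟨l, _ | ⟨w, r⟩, rfl⟩ := List.append_of_mem hv
  · simp only [List.getLast?_append, List.getLast?_singleton, Option.some_or,
      Option.some.injEq] at ht
    exact absurd ht hne
  · exact ⟨w, mem_edgesOf_iff.2 ⟨l, r, rfl⟩⟩

theorem forall_mem_of_head? {P : V → Prop} {p : List V} {a : V} (ha : p.head? = some a)
    (hPa : P a) (hstep : ∀ x y, (x, y) ∈ edgesOf p → P x → P y) : ∀ v ∈ p, P v :=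
  (isChain_iff_forall_mem_edgesOf (R := fun x y => (x, y) ∈ edgesOf p)).2 (fun _ he => he)
    |>.induction P p (fun x y => hstep x y) fun hne => by
      rw [List.head?_eq_some_head hne, Option.some.injEq] at ha
      exact ha ▸ hPa

theorem exists_eq_append_of_mem_edgesOf {β : Type*} [Preorder β] {f : V → β} {C P : List V}
    {c c' : V} (hC : C.Pairwise (f · < f ·)) (hcc : (c, c') ∈ edgesOf C)
    (hP : P.Pairwise (f · < f ·)) (hc : c ∈ P) (hc' : c' ∈ P) :
    ∃ l m r, P = l ++ c :: m ++ c' :: r ∧ ∀ x ∈ m, x ∉ C := by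
  obtain ⟨cl, cr, rfl⟩ := mem_edgesOf_iff.1 hcc
  obtain ⟨l, rest, rfl⟩ := List.append_of_mem hc
  have hc'rest : c' ∈ rest := by
    simp only [List.pairwise_append, List.pairwise_cons, List.mem_append,
      List.mem_cons] at hP hC hc'
    grind [lt_asymm, lt_irrefl]
  obtain ⟨m, r, rfl⟩ := List.append_of_mem hc'rest
  refine ⟨l, m, r, by simp, fun x hx hxC => ?_⟩
  simp only [List.pairwise_append, List.pairwise_cons, List.mem_append, List.mem_cons] at hP hC hxC
  grind [lt_asymm, lt_irrefl]

theorem segment_eq_of_nodup [DecidableEq V] {p l m r : List V} {a z : V} (hp : p.Nodup)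
    (hd : p = l ++ a :: m ++ z :: r) : segment p a z = a :: m ++ [z] := by
  have hal : ∀ x ∈ l, x ≠ a := fun x hx => by
    rw [hd, List.append_assoc] at hp
    exact (List.nodup_append.1 hp).2.2 x hx a (by simp)
  have haz : ∀ x ∈ a :: m, x ≠ z := fun x hx => by
    rw [hd] at hp
    exact (List.nodup_append.1 hp).2.2 x (by simp [hx]) z (by simp)
  rw [segment, hd, List.append_assoc, List.dropWhile_append_of_pos (by simpa using hal),
    List.cons_append, List.dropWhile_cons_of_neg (by simp), ← List.cons_append,
    List.takeWhile_append_of_pos (by simpa using haz)]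
  simp

namespace UFN

section IsPathIn

variable {E : V × V → Prop} {s t : V} {T : List V}

theorem IsPathIn.mem_edgesOf_of_forall_eq (hT : IsPathIn E s t T) {x y : V} (hx : x ∈ T)
    (hxt : x ≠ t) (hy : ∀ w, E (x, w) → w = y) : (x, y) ∈ edgesOf T := by
  obtain ⟨w, hw⟩ := exists_mem_edgesOf_of_ne_getLast? hT.2.1 hx hxt
  rwa [← hy w (isChain_iff_forall_mem_edgesOf.1 hT.2.2.1 _ hw)]

/- `A x` says that the update at `x` selects the flow `P` rather than `Q`; with `P, Q` the new and
old paths (or the old and new ones) this covers `UFN.active` in both directions. -/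
theorem IsPathIn.edgesOf_subset_of_eq_append {A : V → Prop} {P Q l m r : List V} {c c' : V}
    (hT : IsPathIn E s t T)
    (hE : ∀ e, E e → e ∈ edgesOf P ∧ A e.1 ∨ e ∈ edgesOf Q ∧ ¬A e.1) (hP : P.Nodup)
    (hPt : P.getLast? = some t) (hd : P = l ++ c :: m ++ c' :: r)
    (hmQ : ∀ x ∈ m, x ∉ Q) (hc : c ∈ T) (hA : A c) :
    edgesOf (c :: m ++ [c']) ⊆ edgesOf T ∧ c' ∈ T := by
  have hqP : edgesOf (c :: m ++ [c']) ⊆ edgesOf P :=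
    edgesOf_subset_of_infix ⟨l, r, by simp [hd]⟩
  have hstep : ∀ x y, (x, y) ∈ edgesOf (c :: m ++ [c']) → x ∈ T →
      (x, y) ∈ edgesOf T := by
    intro x y hxy hx
    refine hT.mem_edgesOf_of_forall_eq hx
      (fun hxt => not_mem_edgesOf_of_getLast? hP hPt (hxt ▸ hqP hxy)) fun w hw => ?_
    rcases hE _ hw with ⟨hwP, -⟩ | ⟨hwQ, hnA⟩
    · exact snd_eq_of_mem_edgesOf hP hwP (hqP hxy)
    · rcases List.mem_cons.1 (fst_mem_of_mem_edgesOf_concat hxy) with rfl | hxm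
      · exact absurd hA hnA
      · exact absurd (mem_of_mem_edgesOf hwQ).1 (hmQ x hxm)
  have hqT : ∀ v ∈ c :: m ++ [c'], v ∈ T :=
    forall_mem_of_head? rfl hc fun x y hxy hx => (mem_of_mem_edgesOf (hstep x y hxy hx)).2
  exact ⟨fun ⟨x, y⟩ hxy => hstep x y hxy (hqT x (mem_of_mem_edgesOf hxy).1),
    hqT c' (by simp)⟩

theorem IsPathIn.edgesOf_segment_subset [DecidableEq V] {β : Type*} [Preorder β] {f : V → β}
    {A : V → Prop} {P Q C : List V} {c c' : V} (hT : IsPathIn E s t T)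
    (hE : ∀ e, E e → e ∈ edgesOf P ∧ A e.1 ∨ e ∈ edgesOf Q ∧ ¬A e.1)
    (hPf : P.Pairwise (f · < f ·)) (hPt : P.getLast? = some t) (hCf : C.Pairwise (f · < f ·))
    (hCP : ∀ x ∈ C, x ∈ P) (hPQC : ∀ x ∈ P, x ∈ Q → x ∈ C)
    (hcc : (c, c') ∈ edgesOf C) (hc : c ∈ T) (hA : A c) :
    edgesOf (segment P c c') ⊆ edgesOf T ∧ c' ∈ T := by
  have hP : P.Nodup := hPf.imp fun h => ne_of_apply_ne f h.ne
  obtain ⟨l, m, r, hd, hmC⟩ := exists_eq_append_of_mem_edgesOf hCf hcc hPf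
    (hCP _ (mem_of_mem_edgesOf hcc).1) (hCP _ (mem_of_mem_edgesOf hcc).2)
  rw [segment_eq_of_nodup hP hd]
  refine hT.edgesOf_subset_of_eq_append hE hP hPt hd
    (fun x hx hxQ => hmC x hx (hPQC x ?_ hxQ)) hc hA
  simp [hd, hx]

end IsPathIn

variable [DecidableEq V] {k : ℕ} {G : UFN V k}

theorem mem_commons_iff {i : Fin k} {v : V} :
    v ∈ G.commons i ↔ v ∈ G.old i ∧ v ∈ G.new i := by
  simp [commons]

theorem WellFormed.exists_pairwise (hWF : G.WellFormed) (i : Fin k) : ∃ f : V → ℕ,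
    (G.old i).Pairwise (f · < f ·) ∧ (G.new i).Pairwise (f · < f ·) ∧
      (G.commons i).Pairwise (f · < f ·) := by
  obtain ⟨f, hf⟩ := hWF.2.1 i
  have hpw : ∀ p : List V, (∀ e ∈ edgesOf p, f e.1 < f e.2) → p.Pairwise (f · < f ·) :=
    fun p hp => List.pairwise_map.1
      ((List.isChain_map f).2 (isChain_iff_forall_mem_edgesOf.2 hp)).pairwise
  have hold := hpw _ fun e he => hf e (List.mem_append_left _ he)
  exact ⟨f, hold, hpw _ fun e he => hf e (List.mem_append_right _ he),
    hold.sublist List.filter_sublist⟩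

theorem WellFormed.head?_commons (hWF : G.WellFormed) (i : Fin k) :
    (G.commons i).head? = some G.s := by
  obtain ⟨⟨hos, -, -⟩, hns, -, -⟩ := hWF.1 i
  obtain ⟨q, hq⟩ : ∃ q, G.old i = G.s :: q := by
    rcases h : G.old i with _ | ⟨a, q⟩ <;> simp_all
  simp [commons, hq, List.mem_of_mem_head? hns]

section Transient

variable {U : Set (V × Fin k)} {i : Fin k} {T : List V} {c c' : V}

theorem edgesOf_segment_new_subset (hWF : G.WellFormed)
    (hT : IsPathIn (G.active U i) G.s G.t T) (hcc : (c, c') ∈ edgesOf (G.commons i))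
    (hc : c ∈ T) (hU : (c, i) ∈ U) :
    edgesOf (segment (G.new i) c c') ⊆ edgesOf T ∧ c' ∈ T := by
  obtain ⟨f, -, hnew, hcommons⟩ := hWF.exists_pairwise i
  exact hT.edgesOf_segment_subset (A := fun x => (x, i) ∈ U) (fun _ he => he.symm) hnew
    (hWF.1 i).2.2.1 hcommons (fun _ hx => (mem_commons_iff.1 hx).2)
    (fun _ hn ho => mem_commons_iff.2 ⟨ho, hn⟩) hcc hc hU

theorem edgesOf_segment_old_subset (hWF : G.WellFormed)
    (hT : IsPathIn (G.active U i) G.s G.t T) (hcc : (c, c') ∈ edgesOf (G.commons i))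
    (hc : c ∈ T) (hU : (c, i) ∉ U) :
    edgesOf (segment (G.old i) c c') ⊆ edgesOf T ∧ c' ∈ T := by
  obtain ⟨f, hold, -, hcommons⟩ := hWF.exists_pairwise i
  exact hT.edgesOf_segment_subset (A := fun x => (x, i) ∉ U)
    (fun _ he => he.imp_right fun h => ⟨h.1, not_not_intro h.2⟩) hold
    (hWF.1 i).1.2.1 hcommons (fun _ hx => (mem_commons_iff.1 hx).1)
    (fun _ ho hn => mem_commons_iff.2 ⟨ho, hn⟩) hcc hc hU

theorem commons_subset (hWF : G.WellFormed) (hT : IsPathIn (G.active U i) G.s G.t T) :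
    G.commons i ⊆ T :=
  forall_mem_of_head? (hWF.head?_commons i) (List.mem_of_mem_head? hT.1) fun c c' hcc hc => by
    by_cases hU : (c, i) ∈ U
    · exact (edgesOf_segment_new_subset hWF hT hcc hc hU).2
    · exact (edgesOf_segment_old_subset hWF hT hcc hc hU).2

theorem edgesOf_blkNewSeg_subset (hWF : G.WellFormed) {b : Blk V k} (hb : G.IsBlk b)
    (hT : IsPathIn (G.active U b.1) G.s G.t T) (hU : (b.2.1, b.1) ∈ U) :
    edgesOf (G.blkNewSeg b) ⊆ edgesOf T :=
  (edgesOf_segment_new_subset hWF hT hb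
    (commons_subset hWF hT (mem_of_mem_edgesOf hb).1) hU).1

theorem edgesOf_blkOldSeg_subset (hWF : G.WellFormed) {b : Blk V k} (hb : G.IsBlk b)
    (hT : IsPathIn (G.active U b.1) G.s G.t T) (hU : (b.2.1, b.1) ∉ U) :
    edgesOf (G.blkOldSeg b) ⊆ edgesOf T :=
  (edgesOf_segment_old_subset hWF hT hb
    (commons_subset hWF hT (mem_of_mem_edgesOf hb).1) hU).1

end Transient

theorem demand_add_demand_le_cap {T : Fin k → List V}
    (hcap : ∀ u v : V,
      (∑ i : Fin k, if (u, v) ∈ edgesOf (T i) then G.demand i else 0) ≤ G.cap u v)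
    {i j : Fin k} (hij : i ≠ j) {e : V × V} (hi : e ∈ edgesOf (T i))
    (hj : e ∈ edgesOf (T j)) :
    G.demand i + G.demand j ≤ G.cap e.1 e.2 := by
  have := Finset.add_le_sum (f := fun i => if e ∈ edgesOf (T i) then G.demand i else 0)
    (fun _ _ => Nat.zero_le _) (Finset.mem_univ i) (Finset.mem_univ j) hij
  simp only [if_pos hi, if_pos hj] at this
  exact this.trans (hcap e.1 e.2)

end UFN

end FlowUpdate

open FlowUpdate in
/-- In any feasible update sequence, if block `b1` depends on
block `b2`, then the start vertex of `b2` is updated in a round strictly before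
the round in which the start vertex of `b1` is updated. -/
theorem stmt15 {V : Type} [DecidableEq V] {k : ℕ} (G : UFN V k)
    (hWF : G.WellFormed) (R : V × Fin k → ℕ) (hR : G.Feasible R)
    (b1 b2 : UFN.Blk V k) (hdep : G.Dep b1 b2) :
    R (b2.2.1, b2.1) < R (b1.2.1, b1.1) := by
  obtain ⟨hb1, hb2, hne, e, he1, he2, hcap⟩ := hdep
  by_contra! hle
  obtain ⟨T, hT, hcapT⟩ := hR (R (b1.2.1, b1.1)) {(b1.2.1, b1.1)} (by simp)
  have he1T : e ∈ edgesOf (T b1.1) :=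
    UFN.edgesOf_blkNewSeg_subset hWF hb1 (hT b1.1).1 (Or.inr rfl) he1
  have he2T : e ∈ edgesOf (T b2.1) := by
    refine UFN.edgesOf_blkOldSeg_subset hWF hb2 (hT b2.1).1 ?_ he2
    rintro (h | h)
    · exact (not_lt.2 hle) h
    · exact hne (congrArg Prod.snd h).symm
  exact (not_le.2 hcap) (UFN.demand_add_demand_le_cap hcapT hne he1T he2T)
end
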